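/- arXiv:1111.0317 — 2 statements merged into one kernel-verified Lean document; each statement's English description precedes it below -/
import Mathlib

section
/- For every α > 0, β > 0 and every λ ∈ ℝ, ∫_0^∞ (ξ/2) e^{−ξ|λ|} · (β^α/Γ(α)) ξ^{α−1} e^{−βξ} dξ = (α/(2β)) (1 + |λ|/β)^{−(α+1)}. That is, a Laplace density with rate ξ mixed over ξ ~ Gamma(α, rate β) yields the generalized double Pareto GDP(α, β) density π(λ) = (α/(2β))(1 + |λ|/β)^{−(α+1)}. -/
open MeasureTheory Real Set

/-- a Laplace density with rate ξ mixed over `ξ ~ Gamma(α, rate β)` yields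
the generalized double Pareto density:
`∫_0^∞ (ξ/2) e^{−ξ|l|} · (β^α/Γ(α)) ξ^{α−1} e^{−βξ} dξ = (α/(2β)) (1 + |l|/β)^{−(α+1)}`. -/
theorem laplace_gamma_mixture_eq_gdp (α β : ℝ) (hα : 0 < α) (hβ : 0 < β) (l : ℝ) :
    ∫ ξ in Set.Ioi (0 : ℝ),
        (ξ / 2 * Real.exp (-(ξ * |l|))) *
          (β ^ α / Real.Gamma α * ξ ^ (α - 1) * Real.exp (-(β * ξ)))
      = α / (2 * β) * (1 + |l| / β) ^ (-(α + 1)) := by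
  have hr : 0 < β + |l| := by positivity
  have key : ∫ ξ in Set.Ioi (0 : ℝ),
      (ξ / 2 * Real.exp (-(ξ * |l|))) *
        (β ^ α / Real.Gamma α * ξ ^ (α - 1) * Real.exp (-(β * ξ)))
      = (β ^ α / Real.Gamma α / 2) *
        ∫ ξ in Set.Ioi (0 : ℝ), ξ ^ ((α + 1) - 1) * Real.exp (-((β + |l|) * ξ)) := by
    rw [← MeasureTheory.integral_const_mul]
    refine setIntegral_congr_fun measurableSet_Ioi (fun ξ hξ => ?_)
    have hξ0 : 0 < ξ := hξ
    have h1 : ξ ^ ((α + 1) - 1) = ξ ^ (α - 1) * ξ := by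
      rw [show (α + 1) - 1 = (α - 1) + 1 by ring,
        Real.rpow_add hξ0, Real.rpow_one]
    rw [h1, show -((β + |l|) * ξ) = -(ξ * |l|) + -(β * ξ) by ring, Real.exp_add]
    ring
  rw [key, Real.integral_rpow_mul_exp_neg_mul_Ioi (by linarith) hr,
    Real.Gamma_add_one (ne_of_gt hα)]
  have h2 : (1 + |l| / β) = (β + |l|) / β := by field_simp
  rw [h2, Real.rpow_neg (by positivity : (0:ℝ) ≤ (β + |l|) / β), Real.div_rpow hr.le hβ.le,
    one_div, Real.inv_rpow hr.le]
  have hΓ : Real.Gamma α ≠ 0 := Real.Gamma_ne_zero (fun m => by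
    have : (0:ℝ) ≤ m := Nat.cast_nonneg m; intro h; linarith)
  have h3 : β ^ (α + 1) = β ^ α * β := by
    rw [Real.rpow_add hβ, Real.rpow_one]
  rw [h3]
  field_simp
end

section
/- Let μ be a probability measure on ℝ and let g_1, g_2 : ℝ → ℝ be bounded nondecreasing functions. Then ∫ g_1 g_2 dμ ≥ (∫ g_1 dμ)(∫ g_2 dμ), with equality if and only if g_1 is μ-almost everywhere equal to a constant or g_2 is μ-almost everywhere equal to a constant. -/
open MeasureTheory

private lemma cheb_integrable {μ : Measure ℝ} [IsFiniteMeasure μ] {g : ℝ → ℝ}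
    (hm : Monotone g) (hb : ∃ C, ∀ x, |g x| ≤ C) : Integrable g μ := by
  obtain ⟨C, hC⟩ := hb
  exact ⟨hm.measurable.aestronglyMeasurable,
    HasFiniteIntegral.of_bounded (C := C) (Filter.Eventually.of_forall fun x => by
      simpa [Real.norm_eq_abs] using hC x)⟩

/-- If a bounded monotone function is not a.e. constant, there is a threshold `r` with
both `{g ≤ r}` and `{r < g}` of positive measure. -/
private lemma cheb_threshold {μ : Measure ℝ} [IsProbabilityMeasure μ] {g : ℝ → ℝ}
    (hm : Monotone g) (hb : ∃ C, ∀ x, |g x| ≤ C)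
    (hnc : ¬ ∃ c, g =ᵐ[μ] fun _ => c) :
    ∃ r, 0 < μ {x | g x ≤ r} ∧ 0 < μ {x | r < g x} := by
  obtain ⟨C, hC⟩ := hb
  by_contra h
  push_neg at h
  have hmeas : ∀ r : ℝ, MeasurableSet {x | g x ≤ r} := fun r =>
    measurableSet_le hm.measurable measurable_const
  -- for every r, μ {g ≤ r} is 0 or 1
  have hdich : ∀ r : ℝ, μ {x | g x ≤ r} = 0 ∨ μ {x | g x ≤ r} = 1 := by
    intro r
    rcases eq_or_ne (μ {x | g x ≤ r}) 0 with h0 | h0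
    · exact Or.inl h0
    · right
      have hpos : 0 < μ {x | g x ≤ r} := pos_iff_ne_zero.mpr h0
      have h2 := h r hpos
      have hcompl : {x | r < g x} = {x | g x ≤ r}ᶜ := by
        ext x; simp [not_le]
      have : μ {x | g x ≤ r}ᶜ = 0 := by
        rw [← hcompl]; exact le_antisymm h2 zero_le
      exact (prob_compl_eq_zero_iff (hmeas r)).mp this
  set S : Set ℝ := {r | μ {x | g x ≤ r} = 1} with hS
  have hCS : C ∈ S := by
    have : {x | g x ≤ C} = Set.univ := by
      ext x; simp only [Set.mem_setOf_eq, Set.mem_univ, iff_true]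
      exact (abs_le.mp (hC x)).2
    simp [hS, this]
  have hSne : S.Nonempty := ⟨C, hCS⟩
  have hSbdd : BddBelow S := by
    refine ⟨-C, fun r hr => ?_⟩
    by_contra hrC
    push_neg at hrC
    have : {x | g x ≤ r} = ∅ := by
      ext x
      simp only [Set.mem_setOf_eq, Set.mem_empty_iff_false, iff_false, not_le]
      exact lt_of_lt_of_le hrC (neg_le_of_abs_le (hC x))
    rw [hS] at hr
    simp only [Set.mem_setOf_eq, this, measure_empty] at hr
    exact zero_ne_one hr
  set c := sInf S with hc
  -- μ {g < c} = 0
  have hlt : μ {x | g x < c} = 0 := by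
    have hsub : {x | g x < c} ⊆ ⋃ n : ℕ, {x | g x ≤ c - 1 / (n + 1)} := by
      intro x hx
      obtain ⟨n, hn⟩ := exists_nat_one_div_lt (K := ℝ) (sub_pos.mpr hx)
      exact Set.mem_iUnion.mpr ⟨n, by simp only [Set.mem_setOf_eq]; linarith⟩
    refine measure_mono_null hsub (measure_iUnion_null fun n => ?_)
    rcases hdich (c - 1 / (n + 1)) with h0 | h1
    · exact h0
    · exfalso
      have : c ≤ c - 1 / (n + 1) := csInf_le hSbdd h1
      have hpos : (0:ℝ) < 1 / (n + 1) := by positivity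
      linarith
  -- μ {c < g} = 0
  have hgt : μ {x | c < g x} = 0 := by
    have hsub : {x | c < g x} ⊆ ⋃ n : ℕ, {x | g x ≤ c + 1 / (n + 1)}ᶜ := by
      intro x hx
      obtain ⟨n, hn⟩ := exists_nat_one_div_lt (K := ℝ) (sub_pos.mpr hx)
      refine Set.mem_iUnion.mpr ⟨n, ?_⟩
      simp only [Set.mem_compl_iff, Set.mem_setOf_eq, not_le]
      linarith
    refine measure_mono_null hsub (measure_iUnion_null fun n => ?_)
    have hpos : (0:ℝ) < 1 / (n + 1) := by positivity
    obtain ⟨s, hsS, hs⟩ := exists_lt_of_csInf_lt hSne (by linarith : c < c + 1 / (n + 1))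
    have h1 : μ {x | g x ≤ c + 1 / (n + 1)} = 1 := by
      refine le_antisymm prob_le_one ?_
      calc (1:ENNReal) = μ {x | g x ≤ s} := hsS.symm
        _ ≤ μ {x | g x ≤ c + 1 / (n + 1)} :=
          measure_mono fun x hx => le_trans hx (le_of_lt hs)
    exact (prob_compl_eq_zero_iff (hmeas _)).mpr h1
  refine hnc ⟨c, ?_⟩
  refine Filter.eventuallyEq_of_mem (s := {x | g x < c}ᶜ ∩ {x | c < g x}ᶜ) ?_ ?_
  · exact Filter.inter_mem (compl_mem_ae_iff.mpr hlt) (compl_mem_ae_iff.mpr hgt)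
  · intro x hx
    simp only [Set.mem_inter_iff, Set.mem_compl_iff, Set.mem_setOf_eq, not_lt] at hx
    exact le_antisymm hx.2 hx.1

/-- If `g₁` is a.e. constant, the correlation factorizes. -/
private lemma cheb_const_case {μ : Measure ℝ} [IsProbabilityMeasure μ] {g₁ g₂ : ℝ → ℝ}
    (_hint₂ : Integrable g₂ μ) {c : ℝ} (hc : g₁ =ᵐ[μ] fun _ => c) :
    (∫ x, g₁ x * g₂ x ∂μ) = (∫ x, g₁ x ∂μ) * (∫ x, g₂ x ∂μ) := by
  have h1 : (∫ x, g₁ x ∂μ) = c := by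
    rw [integral_congr_ae hc]; simp
  have h2 : (∫ x, g₁ x * g₂ x ∂μ) = ∫ x, c * g₂ x ∂μ :=
    integral_congr_ae (hc.mono fun x hx =>
      show g₁ x * g₂ x = c * g₂ x by rw [show g₁ x = c from hx])
  rw [h1, h2, integral_const_mul]

/-- Chebyshev/FKG correlation inequality with equality characterization:
for a probability measure `μ` on ℝ and bounded nondecreasing `g₁, g₂ : ℝ → ℝ`,
`∫ g₁ g₂ dμ ≥ (∫ g₁ dμ)(∫ g₂ dμ)`, with equality iff `g₁` or `g₂` is μ-a.e. constant. -/
theorem chebyshev_correlation_inequality (μ : Measure ℝ) [IsProbabilityMeasure μ]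
    (g₁ g₂ : ℝ → ℝ) (h₁ : Monotone g₁) (h₂ : Monotone g₂)
    (hb₁ : ∃ C, ∀ x, |g₁ x| ≤ C) (hb₂ : ∃ C, ∀ x, |g₂ x| ≤ C) :
    (∫ x, g₁ x * g₂ x ∂μ) ≥ (∫ x, g₁ x ∂μ) * (∫ x, g₂ x ∂μ) ∧
      ((∫ x, g₁ x * g₂ x ∂μ) = (∫ x, g₁ x ∂μ) * (∫ x, g₂ x ∂μ) ↔
        (∃ c, g₁ =ᵐ[μ] fun _ => c) ∨ (∃ c, g₂ =ᵐ[μ] fun _ => c)) := by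
  obtain ⟨C₁, hC₁⟩ := id hb₁
  obtain ⟨C₂, hC₂⟩ := id hb₂
  have hint₁ : Integrable g₁ μ := cheb_integrable h₁ hb₁
  have hint₂ : Integrable g₂ μ := cheb_integrable h₂ hb₂
  have hint₁₂ : Integrable (fun x => g₁ x * g₂ x) μ :=
    ⟨(h₁.measurable.mul h₂.measurable).aestronglyMeasurable,
      HasFiniteIntegral.of_bounded (C := C₁ * C₂) (Filter.Eventually.of_forall fun x => by
        simp only [Real.norm_eq_abs, abs_mul]
        exact mul_le_mul (hC₁ x) (hC₂ x) (abs_nonneg _)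
          (le_trans (abs_nonneg _) (hC₁ x)))⟩
  set F : ℝ × ℝ → ℝ := fun z => (g₁ z.1 - g₁ z.2) * (g₂ z.1 - g₂ z.2) with hF
  have hFnonneg : ∀ z, 0 ≤ F z := by
    intro z
    show (0:ℝ) ≤ (g₁ z.1 - g₁ z.2) * (g₂ z.1 - g₂ z.2)
    rcases le_total z.2 z.1 with hz | hz
    · exact mul_nonneg (sub_nonneg.mpr (h₁ hz)) (sub_nonneg.mpr (h₂ hz))
    · nlinarith [mul_nonneg (sub_nonneg.mpr (h₁ hz)) (sub_nonneg.mpr (h₂ hz))]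
  have hFint : Integrable F (μ.prod μ) := by
    refine ⟨(((h₁.measurable.comp measurable_fst).sub
        (h₁.measurable.comp measurable_snd)).mul
        ((h₂.measurable.comp measurable_fst).sub
        (h₂.measurable.comp measurable_snd))).aestronglyMeasurable,
      HasFiniteIntegral.of_bounded (C := (2 * C₁) * (2 * C₂))
        (Filter.Eventually.of_forall fun z => ?_)⟩
    simp only [hF, Real.norm_eq_abs, abs_mul]
    have e1 : |g₁ z.1 - g₁ z.2| ≤ 2 * C₁ := by
      calc |g₁ z.1 - g₁ z.2| ≤ |g₁ z.1| + |g₁ z.2| := abs_sub _ _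
        _ ≤ 2 * C₁ := by linarith [hC₁ z.1, hC₁ z.2]
    have e2 : |g₂ z.1 - g₂ z.2| ≤ 2 * C₂ := by
      calc |g₂ z.1 - g₂ z.2| ≤ |g₂ z.1| + |g₂ z.2| := abs_sub _ _
        _ ≤ 2 * C₂ := by linarith [hC₂ z.1, hC₂ z.2]
    exact mul_le_mul e1 e2 (abs_nonneg _) (by linarith [abs_nonneg (g₁ z.1 - g₁ z.2)])
  -- the key identity
  have hkey : (∫ z, F z ∂(μ.prod μ)) =
      2 * ((∫ x, g₁ x * g₂ x ∂μ) - (∫ x, g₁ x ∂μ) * (∫ x, g₂ x ∂μ)) := by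
    have i1 : Integrable (fun z : ℝ × ℝ => (g₁ z.1 * g₂ z.1) * (1:ℝ)) (μ.prod μ) :=
      hint₁₂.mul_prod (integrable_const 1)
    have i2 : Integrable (fun z : ℝ × ℝ => g₁ z.1 * g₂ z.2) (μ.prod μ) :=
      hint₁.mul_prod hint₂
    have i3 : Integrable (fun z : ℝ × ℝ => (1:ℝ) * (g₁ z.2 * g₂ z.2)) (μ.prod μ) :=
      (integrable_const (1:ℝ)).mul_prod hint₁₂
    have i4 : Integrable (fun z : ℝ × ℝ => g₂ z.1 * g₁ z.2) (μ.prod μ) :=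
      hint₂.mul_prod hint₁
    have i12 : Integrable
        (fun z : ℝ × ℝ => (g₁ z.1 * g₂ z.1) * (1:ℝ) - g₁ z.1 * g₂ z.2) (μ.prod μ) :=
      i1.sub i2
    have i34 : Integrable
        (fun z : ℝ × ℝ => (1:ℝ) * (g₁ z.2 * g₂ z.2) - g₂ z.1 * g₁ z.2) (μ.prod μ) :=
      i3.sub i4
    have t1 : (∫ z : ℝ × ℝ, (g₁ z.1 * g₂ z.1) * (1:ℝ) ∂(μ.prod μ)) =
        (∫ x, g₁ x * g₂ x ∂μ) * (∫ _, (1:ℝ) ∂μ) :=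
      integral_prod_mul (fun x => g₁ x * g₂ x) (fun _ => (1:ℝ))
    have t2 : (∫ z : ℝ × ℝ, g₁ z.1 * g₂ z.2 ∂(μ.prod μ)) =
        (∫ x, g₁ x ∂μ) * (∫ y, g₂ y ∂μ) := integral_prod_mul g₁ g₂
    have t3 : (∫ z : ℝ × ℝ, (1:ℝ) * (g₁ z.2 * g₂ z.2) ∂(μ.prod μ)) =
        (∫ _, (1:ℝ) ∂μ) * (∫ x, g₁ x * g₂ x ∂μ) :=
      integral_prod_mul (fun _ => (1:ℝ)) (fun x => g₁ x * g₂ x)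
    have t4 : (∫ z : ℝ × ℝ, g₂ z.1 * g₁ z.2 ∂(μ.prod μ)) =
        (∫ x, g₂ x ∂μ) * (∫ y, g₁ y ∂μ) := integral_prod_mul g₂ g₁
    calc (∫ z, F z ∂(μ.prod μ))
        = ∫ z : ℝ × ℝ, ((g₁ z.1 * g₂ z.1) * (1:ℝ) - g₁ z.1 * g₂ z.2)
            + ((1:ℝ) * (g₁ z.2 * g₂ z.2) - g₂ z.1 * g₁ z.2) ∂(μ.prod μ) :=
          integral_congr_ae (Filter.Eventually.of_forall fun z => by
            show (g₁ z.1 - g₁ z.2) * (g₂ z.1 - g₂ z.2) = _; ring)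
      _ = ((∫ x, g₁ x * g₂ x ∂μ) * (∫ _, (1:ℝ) ∂μ) - (∫ x, g₁ x ∂μ) * (∫ y, g₂ y ∂μ))
            + ((∫ _, (1:ℝ) ∂μ) * (∫ x, g₁ x * g₂ x ∂μ)
              - (∫ x, g₂ x ∂μ) * (∫ y, g₁ y ∂μ)) := by
          rw [integral_add i12 i34, integral_sub i1 i2, integral_sub i3 i4, t1, t2, t3, t4]
      _ = 2 * ((∫ x, g₁ x * g₂ x ∂μ) - (∫ x, g₁ x ∂μ) * (∫ x, g₂ x ∂μ)) := by
          simp only [integral_const, measure_univ, probReal_univ, ENNReal.toReal_one, smul_eq_mul,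
            one_mul, mul_one]
          ring
  have hInonneg : 0 ≤ ∫ z, F z ∂(μ.prod μ) := integral_nonneg hFnonneg
  have hineq : (∫ x, g₁ x * g₂ x ∂μ) ≥ (∫ x, g₁ x ∂μ) * (∫ x, g₂ x ∂μ) := by
    rw [hkey] at hInonneg; linarith
  refine ⟨hineq, ?_, ?_⟩
  · -- equality → one of them a.e. constant
    intro heq
    by_contra hcon
    push_neg at hcon
    obtain ⟨hnc₁, hnc₂⟩ := hcon
    -- F = 0 a.e.
    have hI0 : (∫ z, F z ∂(μ.prod μ)) = 0 := by rw [hkey, heq]; ring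
    have hF0 : F =ᵐ[μ.prod μ] 0 :=
      (integral_eq_zero_iff_of_nonneg hFnonneg hFint).mp hI0
    have hae : ∀ᵐ x ∂μ, ∀ᵐ y ∂μ, (g₁ x - g₁ y) * (g₂ x - g₂ y) = 0 :=
      Measure.ae_ae_of_ae_prod hF0
    -- threshold for g₁
    obtain ⟨r, hA, hB⟩ := cheb_threshold h₁ hb₁ (not_exists.mpr hnc₁)
    have hfreqA : ∃ᵐ x ∂μ, g₁ x ≤ r := frequently_ae_mem_iff.mpr hA.ne'
    have hfreqB : ∃ᵐ y ∂μ, r < g₁ y := frequently_ae_mem_iff.mpr hB.ne'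
    -- pick x₀ with g₁ x₀ ≤ r satisfying the a.e. condition
    obtain ⟨x₀, hx₀A, hx₀⟩ := (hfreqA.and_eventually hae).exists
    set c := g₂ x₀ with hcdef
    -- a.e. y with r < g₁ y, we have g₂ y = c
    have hBg : ∀ᵐ y ∂μ, r < g₁ y → g₂ y = c := by
      filter_upwards [hx₀] with y hy hyB
      rcases mul_eq_zero.mp hy with h | h
      · exfalso; have := sub_eq_zero.mp h; linarith
      · have := sub_eq_zero.mp h; linarith
    -- the symmetric a.e. statement
    have hae' : ∀ᵐ y ∂μ, ∀ᵐ x ∂μ, (g₁ x - g₁ y) * (g₂ x - g₂ y) = 0 := by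
      have hF0' : (fun z : ℝ × ℝ => (g₁ z.2 - g₁ z.1) * (g₂ z.2 - g₂ z.1))
          =ᵐ[μ.prod μ] 0 := hF0.mono fun z hz => by
        have hz' : (g₁ z.1 - g₁ z.2) * (g₂ z.1 - g₂ z.2) = 0 := hz
        show (g₁ z.2 - g₁ z.1) * (g₂ z.2 - g₂ z.1) = 0
        linear_combination hz'
      exact Measure.ae_ae_of_ae_prod hF0'
    -- pick y₀ with r < g₁ y₀, g₂ y₀ = c, satisfying the a.e. condition
    have hfreqBc : ∃ᵐ y ∂μ, r < g₁ y ∧ g₂ y = c :=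
      (hfreqB.and_eventually hBg).mono fun y hy => ⟨hy.1, hy.2 hy.1⟩
    obtain ⟨y₀, ⟨hy₀B, hy₀c⟩, hy₀⟩ := (hfreqBc.and_eventually hae').exists
    -- a.e. x with g₁ x ≤ r, we have g₂ x = c
    have hAg : ∀ᵐ x ∂μ, g₁ x ≤ r → g₂ x = c := by
      filter_upwards [hy₀] with x hx hxA
      rcases mul_eq_zero.mp hx with h | h
      · exfalso; have := sub_eq_zero.mp h; linarith
      · have := sub_eq_zero.mp h; rw [this, hy₀c]
    refine hnc₂ c ?_
    filter_upwards [hAg, hBg] with x hxA hxB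
    by_cases hx : g₁ x ≤ r
    · exact hxA hx
    · exact hxB (lt_of_not_ge hx)
  · rintro (⟨c, hc⟩ | ⟨c, hc⟩)
    · exact cheb_const_case hint₂ hc
    · have := cheb_const_case (g₁ := g₂) (g₂ := g₁) hint₁ hc
      calc (∫ x, g₁ x * g₂ x ∂μ) = ∫ x, g₂ x * g₁ x ∂μ := by
            simp only [mul_comm]
        _ = (∫ x, g₂ x ∂μ) * (∫ x, g₁ x ∂μ) := this
        _ = (∫ x, g₁ x ∂μ) * (∫ x, g₂ x ∂μ) := mul_comm _ _
end
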